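/- Let h_t have the mixture EGG distribution with parameters α ∈ [0,1], β, a, b, c > 0, let h_p be independent of h_t with pointing-error density f(h) = μ² A₀^{−μ²} h^{μ²−1} on (0, A₀] (μ, A₀ > 0), and let h_a > 0 be a constant. Then the product h₁ = h_a·h_t·h_p satisfies, for every s > 0, E[h₁^s] = (A₀ h_a)^s·(μ²/(μ²+s))·[α β^s Γ(1+s) + (1−α) b^s Γ(a+s/c)/Γ(a)]. -/

import Mathlib

/-!
Both factors are a.s. positive, so `h₁ ^ s = h_a ^ s * h_t ^ s * h_p ^ s` a.s., and independence
splits the expectation; the product formula for independent variables needs no integrability.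
The turbulence density is a mixture of an exponential law and Stacy's generalized gamma law,
whose `s`-th moments are Gamma integrals after the substitution `y = (x / b) ^ c`; the
pointing-loss moment is an elementary power integral over `(0, A₀]`.
-/

open MeasureTheory ProbabilityTheory Real Set

section LawWithDensity

variable {Ω α : Type*} [MeasurableSpace Ω] [MeasurableSpace α] {P : Measure Ω} {ν : Measure α}
  {X : Ω → α}

theorem ae_mem_of_map_eq_withDensity {f : α → ENNReal} {s : Set α} (hX : AEMeasurable X P)
    (hf : AEMeasurable f ν) (hlaw : P.map X = ν.withDensity f) (hfs : ∀ x ∉ s, f x = 0) :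
    ∀ᵐ ω ∂P, X ω ∈ s := by
  refine ae_of_ae_map hX ?_
  rw [hlaw, ae_withDensity_iff' hf]
  exact ae_of_all _ fun x hx => by_contra fun hxs => hx (hfs x hxs)

theorem integral_comp_of_map_eq_withDensity_ofReal {g : α → ℝ} (hX : AEMeasurable X P)
    (hg : AEMeasurable g ν) (hg0 : ∀ x, 0 ≤ g x)
    (hlaw : P.map X = ν.withDensity fun x => ENNReal.ofReal (g x))
    {F : α → ℝ} (hF : AEStronglyMeasurable F (P.map X)) :
    ∫ ω, F (X ω) ∂P = ∫ x, g x * F x ∂ν := by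
  rw [← integral_map hX hF, hlaw, integral_withDensity_eq_integral_toReal_smul₀ hg.ennreal_ofReal
    (ae_of_all _ fun _ => ENNReal.ofReal_lt_top)]
  simp only [ENNReal.toReal_ofReal (hg0 _), smul_eq_mul]

end LawWithDensity

theorem integral_Ioi_rpow_mul_exp_neg_div_rpow {q b c : ℝ} (hq : -1 < q) (hb : 0 < b)
    (hc : 0 < c) :
    ∫ x in Ioi (0 : ℝ), x ^ q * exp (-(x / b) ^ c) = b ^ (q + 1) / c * Gamma ((q + 1) / c) := by
  have hbc : 0 < b ^ c := rpow_pos_of_pos hb c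
  have hexp : EqOn (fun x => x ^ q * exp (-(x / b) ^ c))
      (fun x => x ^ q * exp (-(b ^ c)⁻¹ * x ^ c)) (Ioi 0) := fun x hx => by
    simp only [div_rpow (le_of_lt hx) hb.le, neg_mul, inv_mul_eq_div]
  rw [setIntegral_congr_fun measurableSet_Ioi hexp,
    integral_rpow_mul_exp_neg_mul_rpow hc hq (inv_pos.mpr hbc), inv_rpow hbc.le,
    ← rpow_mul hb.le, ← rpow_neg hb.le, mul_div_cancel₀ _ hc.ne', neg_neg]
  ring

noncomputable def genGammaPdf (a b c x : ℝ) : ℝ :=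
  c * x ^ (a * c - 1) / (b ^ (a * c) * Gamma a) * exp (-(x / b) ^ c)

section GenGamma

variable {a b c : ℝ}

theorem genGammaPdf_nonneg (ha : 0 < a) (hb : 0 < b) (hc : 0 < c) {x : ℝ} (hx : 0 ≤ x) :
    0 ≤ genGammaPdf a b c x := by
  have := Gamma_pos_of_pos ha
  unfold genGammaPdf
  positivity

theorem genGammaPdf_one_one (β x : ℝ) : genGammaPdf 1 β 1 x = 1 / β * exp (-x / β) := by
  simp [genGammaPdf, Gamma_one, neg_div]

theorem integrableOn_genGammaPdf_mul_rpow (hb : 0 < b) (hc : 0 < c) {s : ℝ} (hs : -(a * c) < s) :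
    IntegrableOn (fun x => genGammaPdf a b c x * x ^ s) (Ioi 0) := by
  have hbc : 0 < b ^ c := rpow_pos_of_pos hb c
  have hbase : IntegrableOn
      (fun x => c / (b ^ (a * c) * Gamma a) * (x ^ (s + (a * c - 1)) * exp (-(b ^ c)⁻¹ * x ^ c)))
      (Ioi 0) :=
    (integrableOn_rpow_mul_exp_neg_mul_rpow (by linarith) hc (inv_pos.mpr hbc)).const_mul _
  refine hbase.congr_fun (fun x hx => ?_) measurableSet_Ioi
  simp only [genGammaPdf, div_rpow (le_of_lt hx) hb.le, rpow_add hx, neg_mul, inv_mul_eq_div]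
  ring

theorem integral_genGammaPdf_mul_rpow (hb : 0 < b) (hc : 0 < c) {s : ℝ} (hs : -(a * c) < s) :
    ∫ x in Ioi (0 : ℝ), genGammaPdf a b c x * x ^ s = b ^ s * Gamma (a + s / c) / Gamma a := by
  have hfactor : EqOn (fun x => genGammaPdf a b c x * x ^ s)
      (fun x => c / (b ^ (a * c) * Gamma a) * (x ^ (s + (a * c - 1)) * exp (-(x / b) ^ c)))
      (Ioi 0) := fun x hx => by
    simp only [genGammaPdf, rpow_add (show (0 : ℝ) < x from hx)]
    ring
  rw [setIntegral_congr_fun measurableSet_Ioi hfactor, integral_const_mul,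
    integral_Ioi_rpow_mul_exp_neg_div_rpow (by linarith) hb hc,
    show s + (a * c - 1) + 1 = s + a * c by ring, rpow_add hb,
    show (s + a * c) / c = a + s / c by field_simp; ring]
  field_simp

end GenGamma

noncomputable def eggMixturePdf (α β a b c x : ℝ) : ℝ :=
  if 0 < x then
    α / β * exp (-x / β) +
      (1 - α) * (c * x ^ (a * c - 1) / (b ^ (a * c) * Gamma a)) * exp (-(x / b) ^ c)
  else 0

section EggMixture

variable {α β a b c : ℝ}

theorem eggMixturePdf_of_pos {x : ℝ} (hx : 0 < x) :
    eggMixturePdf α β a b c x = α * genGammaPdf 1 β 1 x + (1 - α) * genGammaPdf a b c x := by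
  rw [eggMixturePdf, if_pos hx, genGammaPdf_one_one, genGammaPdf]
  ring

theorem eggMixturePdf_of_nonpos {x : ℝ} (hx : x ≤ 0) : eggMixturePdf α β a b c x = 0 :=
  if_neg hx.not_gt

theorem measurable_eggMixturePdf : Measurable (eggMixturePdf α β a b c) :=
  Measurable.ite measurableSet_Ioi (by fun_prop) measurable_const

theorem eggMixturePdf_nonneg (hα0 : 0 ≤ α) (hα1 : α ≤ 1) (hβ : 0 < β) (ha : 0 < a) (hb : 0 < b)
    (hc : 0 < c) (x : ℝ) : 0 ≤ eggMixturePdf α β a b c x := by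
  rcases le_or_gt x 0 with hx | hx
  · exact (eggMixturePdf_of_nonpos hx).ge
  · rw [eggMixturePdf_of_pos hx]
    have := genGammaPdf_nonneg one_pos hβ one_pos hx.le
    have := genGammaPdf_nonneg ha hb hc hx.le
    have : 0 ≤ 1 - α := sub_nonneg.mpr hα1
    positivity

theorem integral_eggMixturePdf_mul_rpow (hβ : 0 < β) (hb : 0 < b) (hc : 0 < c) {s : ℝ}
    (hs1 : -1 < s) (hs : -(a * c) < s) :
    ∫ x, eggMixturePdf α β a b c x * x ^ s =
      α * β ^ s * Gamma (1 + s) + (1 - α) * b ^ s * Gamma (a + s / c) / Gamma a := by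
  have hsplit : EqOn (fun x => eggMixturePdf α β a b c x * x ^ s)
      (fun x => α * (genGammaPdf 1 β 1 x * x ^ s) + (1 - α) * (genGammaPdf a b c x * x ^ s))
      (Ioi 0) := fun x hx => by
    simp only [eggMixturePdf_of_pos (show 0 < x from hx)]
    ring
  have hexp := integrableOn_genGammaPdf_mul_rpow hβ one_pos (by simpa using hs1)
  have hgg := integrableOn_genGammaPdf_mul_rpow hb hc hs
  have hzero : ∀ x ∉ Ioi (0 : ℝ), eggMixturePdf α β a b c x * x ^ s = 0 := fun x hx => by
    rw [eggMixturePdf_of_nonpos (not_lt.mp hx), zero_mul]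
  rw [← setIntegral_eq_integral_of_forall_compl_eq_zero hzero,
    setIntegral_congr_fun measurableSet_Ioi hsplit,
    integral_add (hexp.const_mul α) (hgg.const_mul (1 - α)), integral_const_mul,
    integral_const_mul, integral_genGammaPdf_mul_rpow hβ one_pos (by simpa using hs1),
    integral_genGammaPdf_mul_rpow hb hc hs, Gamma_one, div_one, div_one]
  ring

end EggMixture

noncomputable def powerLawPdf (k A x : ℝ) : ℝ :=
  if 0 < x ∧ x ≤ A then k / A ^ k * x ^ (k - 1) else 0

section PowerLaw

variable {k A : ℝ}

theorem powerLawPdf_of_nonpos {x : ℝ} (hx : x ≤ 0) : powerLawPdf k A x = 0 :=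
  if_neg fun h => hx.not_gt h.1

theorem measurable_powerLawPdf : Measurable (powerLawPdf k A) :=
  Measurable.ite (measurableSet_Ioi.inter measurableSet_Iic) (by fun_prop) measurable_const

theorem powerLawPdf_nonneg (hk : 0 ≤ k) (x : ℝ) : 0 ≤ powerLawPdf k A x := by
  unfold powerLawPdf
  split_ifs with hx
  · have : 0 < A := hx.1.trans_le hx.2
    have := hx.1
    positivity
  · exact le_rfl

theorem integral_powerLawPdf_mul_rpow (hA : 0 < A) {s : ℝ} (hs : -k < s) :
    ∫ x, powerLawPdf k A x * x ^ s = A ^ s * (k / (k + s)) := by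
  have hpow : EqOn (fun x => powerLawPdf k A x * x ^ s)
      (fun x => k / A ^ k * x ^ (s + (k - 1))) (Ioc 0 A) := fun x hx => by
    simp only [powerLawPdf, if_pos (show 0 < x ∧ x ≤ A from hx), rpow_add hx.1]
    ring
  have hzero : ∀ x ∉ Ioc 0 A, powerLawPdf k A x * x ^ s = 0 := fun x hx => by
    rw [powerLawPdf, if_neg (show ¬(0 < x ∧ x ≤ A) from hx), zero_mul]
  rw [← setIntegral_eq_integral_of_forall_compl_eq_zero hzero,
    setIntegral_congr_fun measurableSet_Ioc hpow, ← intervalIntegral.integral_of_le hA.le,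
    intervalIntegral.integral_const_mul, integral_rpow (Or.inl (by linarith)),
    show s + (k - 1) + 1 = k + s by ring, zero_rpow (by linarith), rpow_add hA]
  have : 0 < A ^ k := rpow_pos_of_pos hA k
  field_simp
  ring

end PowerLaw

theorem stmt_9_general {Ω : Type*} [MeasureSpace Ω]
    (ht hp : Ω → ℝ) (htm : Measurable ht) (hpm : Measurable hp)
    (α β a b c μ A₀ ha : ℝ) (hα0 : 0 ≤ α) (hα1 : α ≤ 1)
    (hβ : 0 < β) (ha' : 0 < a) (hb : 0 < b) (hc : 0 < c)
    (hA : 0 < A₀) (hha : 0 < ha)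
    (hindep : IndepFun ht hp ℙ)
    (hdt : Measure.map ht ℙ = volume.withDensity (fun x => ENNReal.ofReal
        (if 0 < x then
          α / β * Real.exp (-x / β) +
            (1 - α) * (c * x ^ (a * c - 1) / (b ^ (a * c) * Real.Gamma a)) *
              Real.exp (-(x / b) ^ c)
        else 0)))
    (hdp : Measure.map hp ℙ = volume.withDensity (fun h => ENNReal.ofReal
        (if 0 < h ∧ h ≤ A₀ then μ ^ 2 / A₀ ^ (μ ^ 2) * h ^ (μ ^ 2 - 1) else 0)))
    (s : ℝ) (hs : 0 < s) :
    ∫ ω, (ha * ht ω * hp ω) ^ s ∂(ℙ : Measure Ω) =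
      (A₀ * ha) ^ s * (μ ^ 2 / (μ ^ 2 + s)) *
        (α * β ^ s * Real.Gamma (1 + s) +
          (1 - α) * b ^ s * Real.Gamma (a + s / c) / Real.Gamma a) := by
  change _ = volume.withDensity fun x => ENNReal.ofReal (eggMixturePdf α β a b c x) at hdt
  change _ = volume.withDensity fun x => ENNReal.ofReal (powerLawPdf (μ ^ 2) A₀ x) at hdp
  have hpos_t : ∀ᵐ ω, ht ω ∈ Ioi 0 :=
    ae_mem_of_map_eq_withDensity htm.aemeasurable
      measurable_eggMixturePdf.ennreal_ofReal.aemeasurable hdt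
      fun x hx => by rw [eggMixturePdf_of_nonpos (not_lt.mp hx), ENNReal.ofReal_zero]
  have hpos_p : ∀ᵐ ω, hp ω ∈ Ioi 0 :=
    ae_mem_of_map_eq_withDensity hpm.aemeasurable
      measurable_powerLawPdf.ennreal_ofReal.aemeasurable hdp
      fun x hx => by rw [powerLawPdf_of_nonpos (not_lt.mp hx), ENNReal.ofReal_zero]
  have hfactor : (fun ω => (ha * ht ω * hp ω) ^ s) =ᵐ[ℙ]
      fun ω => ha ^ s * (ht ω ^ s * hp ω ^ s) := by
    filter_upwards [hpos_t, hpos_p] with ω ht0 hp0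
    rw [mul_rpow (mul_pos hha ht0).le (le_of_lt hp0), mul_rpow hha.le (le_of_lt ht0), mul_assoc]
  have hrpow : Measurable fun x : ℝ => x ^ s := by fun_prop
  rw [integral_congr_ae hfactor, integral_const_mul,
    hindep.integral_fun_comp_mul_comp htm.aemeasurable hpm.aemeasurable
      hrpow.aestronglyMeasurable hrpow.aestronglyMeasurable,
    integral_comp_of_map_eq_withDensity_ofReal htm.aemeasurable
      measurable_eggMixturePdf.aemeasurable (eggMixturePdf_nonneg hα0 hα1 hβ ha' hb hc) hdt
      hrpow.aestronglyMeasurable,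
    integral_comp_of_map_eq_withDensity_ofReal hpm.aemeasurable
      measurable_powerLawPdf.aemeasurable (powerLawPdf_nonneg (sq_nonneg μ)) hdp
      hrpow.aestronglyMeasurable,
    integral_eggMixturePdf_mul_rpow hβ hb hc (by linarith) (by nlinarith [mul_pos ha' hc]),
    integral_powerLawPdf_mul_rpow hA (by nlinarith), mul_rpow hA.le hha.le]
  ring

/-- Moments of the composite gain h₁ = h_a·h_t·h_p with independent mixture-EGG turbulence h_t
and pointing loss h_p: for s > 0,
E[h₁^s] = (A₀h_a)^s·(μ²/(μ²+s))·[αβ^sΓ(1+s) + (1−α)b^sΓ(a+s/c)/Γ(a)]. -/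
theorem stmt_9 {Ω : Type*} [MeasureSpace Ω] [IsProbabilityMeasure (ℙ : Measure Ω)]
    (ht hp : Ω → ℝ) (htm : Measurable ht) (hpm : Measurable hp)
    (α β a b c μ A₀ ha : ℝ) (hα0 : 0 ≤ α) (hα1 : α ≤ 1)
    (hβ : 0 < β) (ha' : 0 < a) (hb : 0 < b) (hc : 0 < c)
    (hμ : 0 < μ) (hA : 0 < A₀) (hha : 0 < ha)
    (hindep : IndepFun ht hp ℙ)
    (hdt : Measure.map ht ℙ = volume.withDensity (fun x => ENNReal.ofReal
        (if 0 < x then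
          α / β * Real.exp (-x / β) +
            (1 - α) * (c * x ^ (a * c - 1) / (b ^ (a * c) * Real.Gamma a)) *
              Real.exp (-(x / b) ^ c)
        else 0)))
    (hdp : Measure.map hp ℙ = volume.withDensity (fun h => ENNReal.ofReal
        (if 0 < h ∧ h ≤ A₀ then μ ^ 2 / A₀ ^ (μ ^ 2) * h ^ (μ ^ 2 - 1) else 0)))
    (s : ℝ) (hs : 0 < s) :
    ∫ ω, (ha * ht ω * hp ω) ^ s ∂(ℙ : Measure Ω) =
      (A₀ * ha) ^ s * (μ ^ 2 / (μ ^ 2 + s)) *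
        (α * β ^ s * Real.Gamma (1 + s) +
          (1 - α) * b ^ s * Real.Gamma (a + s / c) / Real.Gamma a) :=
  stmt_9_general ht hp htm hpm α β a b c μ A₀ ha hα0 hα1 hβ ha' hb hc hA hha hindep hdt hdp s hs
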